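/- arXiv:1207.0107 — 8 statements merged into one kernel-verified Lean document; each statement's English description precedes it below -/
import Mathlib

section
/- Let q ∈ ℂ with |q| > 1, let n, p be positive integers, and let A : ℂ∖{0} → Mat_n(ℂ) and B : ℂ∖{0} → Mat_p(ℂ) be matrices whose entries are Laurent polynomials in z and such that A(z) and B(z) are invertible for every z ≠ 0. Let r > 0 and let F : {z ∈ ℂ : 0 < |z| < r} → Mat_{p,n}(ℂ) be a matrix-valued function holomorphic (entrywise) on the punctured disk, satisfying F(qz) = B(z) · F(z) · A(z)⁻¹ for every z with 0 < |z| and |qz| < r. Then F extends to a function holomorphic (entrywise) on all of ℂ∖{0} satisfying the same functional equation for all z ≠ 0. -/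
/-!
Reading the functional equation backwards, `F z = B (z/q) * F (z/q) * (A (z/q))⁻¹`, defines `F`
on the punctured disk of radius `r * ‖q‖ ^ (k + 1)` from its values on the disk of radius
`r * ‖q‖ ^ k`. These successive continuations agree where they overlap, they stay holomorphic
because `B` and `A⁻¹` are holomorphic on `ℂ∖{0}`, and since `‖q‖ > 1` their domains exhaust `ℂ∖{0}`.
-/

open Complex Set

def puncturedBall {E : Type*} [Norm E] (R : ℝ) : Set E := {z | 0 < ‖z‖ ∧ ‖z‖ < R}

theorem isOpen_puncturedBall {E : Type*} [SeminormedAddGroup E] (R : ℝ) :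
    IsOpen (puncturedBall R : Set E) :=
  (isOpen_Ioi.preimage continuous_norm).inter (isOpen_Iio.preimage continuous_norm)

theorem puncturedBall_subset_compl_zero {E : Type*} [NormedAddGroup E] (R : ℝ) :
    (puncturedBall R : Set E) ⊆ {0}ᶜ :=
  fun _ hz => norm_pos_iff.mp hz.1

section PuncturedBall

variable {𝕜 : Type*} [NormedField 𝕜]

theorem div_mem_puncturedBall {q z : 𝕜} {R : ℝ} (hq : q ≠ 0)
    (hz : z ∈ puncturedBall (R * ‖q‖)) : z / q ∈ puncturedBall R := by
  have hq' : 0 < ‖q‖ := norm_pos_iff.mpr hq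
  refine ⟨?_, ?_⟩ <;> rw [norm_div]
  · exact div_pos hz.1 hq'
  · exact (div_lt_iff₀ hq').mpr hz.2

theorem mul_mem_puncturedBall {q z : 𝕜} {R : ℝ} (hq : q ≠ 0) (hz : z ∈ puncturedBall R) :
    q * z ∈ puncturedBall (‖q‖ * R) := by
  have hq' : 0 < ‖q‖ := norm_pos_iff.mpr hq
  refine ⟨?_, ?_⟩ <;> rw [norm_mul]
  · exact mul_pos hq' hz.1
  · exact mul_lt_mul_of_pos_left hz.2 hq'

theorem exists_mem_puncturedBall_mul_pow {q z : 𝕜} {r : ℝ} (hq : 1 < ‖q‖) (hr : 0 < r)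
    (hz : z ≠ 0) : ∃ k : ℕ, z ∈ puncturedBall (r * ‖q‖ ^ k) := by
  obtain ⟨k, hk⟩ := pow_unbounded_of_one_lt (‖z‖ / r) hq
  exact ⟨k, norm_pos_iff.mpr hz, by rwa [div_lt_iff₀ hr, mul_comm] at hk⟩

end PuncturedBall

section QContinuation

variable {𝕜 X : Type*} [NormedField 𝕜] {q : 𝕜} {Φ : 𝕜 → X → X} {F : 𝕜 → X} {r : ℝ}

variable (q Φ F) in
def qContinuation : ℕ → 𝕜 → X
  | 0 => F
  | k + 1 => fun z => Φ (z / q) (qContinuation k (z / q))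

theorem qContinuation_succ_eq (hq : q ≠ 0)
    (hfe : ∀ z : 𝕜, 0 < ‖z‖ → ‖q * z‖ < r → F (q * z) = Φ z (F z)) (k : ℕ) :
    EqOn (qContinuation q Φ F (k + 1)) (qContinuation q Φ F k) (puncturedBall (r * ‖q‖ ^ k)) := by
  induction k with
  | zero =>
    intro z hz
    rw [pow_zero, mul_one] at hz
    have hzq : 0 < ‖z / q‖ := norm_pos_iff.mpr (div_ne_zero (norm_pos_iff.mp hz.1) hq)
    have := hfe (z / q) hzq (by rw [mul_div_cancel₀ _ hq]; exact hz.2)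
    rw [mul_div_cancel₀ _ hq] at this
    exact this.symm
  | succ k ih =>
    intro z hz
    rw [pow_succ, ← mul_assoc] at hz
    exact congrArg (Φ (z / q)) (ih (div_mem_puncturedBall hq hz))

theorem qContinuation_eq_of_le (hq : 1 ≤ ‖q‖) (hr : 0 ≤ r)
    (hfe : ∀ z : 𝕜, 0 < ‖z‖ → ‖q * z‖ < r → F (q * z) = Φ z (F z)) {k l : ℕ} (hkl : k ≤ l) :
    EqOn (qContinuation q Φ F l) (qContinuation q Φ F k) (puncturedBall (r * ‖q‖ ^ k)) := by
  have hq0 : q ≠ 0 := norm_pos_iff.mp (one_pos.trans_le hq)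
  induction l, hkl using Nat.le_induction with
  | base => exact eqOn_refl _ _
  | succ l hkl ih =>
    intro z hz
    have hzl : z ∈ puncturedBall (r * ‖q‖ ^ l) :=
      ⟨hz.1, hz.2.trans_le (by gcongr)⟩
    rw [qContinuation_succ_eq hq0 hfe l hzl, ih hz]

theorem exists_eqOn_qContinuation (hq : 1 < ‖q‖) (hr : 0 < r)
    (hfe : ∀ z : 𝕜, 0 < ‖z‖ → ‖q * z‖ < r → F (q * z) = Φ z (F z)) :
    ∃ G : 𝕜 → X, ∀ k, EqOn G (qContinuation q Φ F k) (puncturedBall (r * ‖q‖ ^ k)) := by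
  classical
  refine ⟨fun z => if hz : z = 0 then F z else
    qContinuation q Φ F (exists_mem_puncturedBall_mul_pow hq hr hz).choose z, fun k z hzk => ?_⟩
  have hz : z ≠ 0 := puncturedBall_subset_compl_zero _ hzk
  have hN := (exists_mem_puncturedBall_mul_pow hq hr hz).choose_spec
  simp only [dif_neg hz]
  rcases le_total k (exists_mem_puncturedBall_mul_pow hq hr hz).choose with h | h
  · exact qContinuation_eq_of_le hq.le hr.le hfe h hzk
  · exact (qContinuation_eq_of_le hq.le hr.le hfe h hN).symm

theorem map_mul_eq_of_eqOn_qContinuation (hq : 1 < ‖q‖) (hr : 0 < r) {G : 𝕜 → X}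
    (hG : ∀ k, EqOn G (qContinuation q Φ F k) (puncturedBall (r * ‖q‖ ^ k))) {z : 𝕜}
    (hz : z ≠ 0) : G (q * z) = Φ z (G z) := by
  have hq0 : q ≠ 0 := norm_pos_iff.mp (one_pos.trans hq)
  obtain ⟨k, hzk⟩ := exists_mem_puncturedBall_mul_pow hq hr hz
  have hqz : q * z ∈ puncturedBall (r * ‖q‖ ^ (k + 1)) := by
    convert mul_mem_puncturedBall hq0 hzk using 2; ring
  rw [hG (k + 1) hqz, hG k hzk]
  dsimp only [qContinuation]
  rw [mul_div_cancel_left₀ _ hq0]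

end QContinuation

section Holomorphy

variable {𝕜 : Type*} [NontriviallyNormedField 𝕜]

theorem differentiableOn_compl_zero_of_eq_laurent {f : 𝕜 → 𝕜}
    (hf : ∃ (s : Finset ℤ) (c : ℤ → 𝕜), ∀ z : 𝕜, z ≠ 0 → f z = ∑ k ∈ s, c k * z ^ k) :
    DifferentiableOn 𝕜 f {0}ᶜ := by
  obtain ⟨s, c, hc⟩ := hf
  refine DifferentiableOn.congr (.fun_sum fun k _ => ?_) hc
  exact (differentiableOn_const _).mul (differentiableOn_zpow k _ (.inl (by simp)))

theorem differentiableOn_of_eqOn_puncturedBall {E : Type*} [NormedAddCommGroup E]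
    [NormedSpace 𝕜 E] {R : ℕ → ℝ} (hR : ∀ z : 𝕜, z ≠ 0 → ∃ k, z ∈ puncturedBall (R k))
    {f : 𝕜 → E} {g : ℕ → 𝕜 → E} (hg : ∀ k, DifferentiableOn 𝕜 (g k) (puncturedBall (R k)))
    (hfg : ∀ k, EqOn f (g k) (puncturedBall (R k))) : DifferentiableOn 𝕜 f {0}ᶜ := by
  refine differentiableOn_of_locally_differentiableOn fun z hz => ?_
  obtain ⟨k, hzk⟩ := hR z hz
  exact ⟨_, isOpen_puncturedBall (R k), hzk,
    ((hg k).congr (hfg k)).mono inter_subset_right⟩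

namespace Matrix

variable {l m n : Type*} [Fintype m] {s : Set 𝕜}

theorem differentiableOn_mul_apply {M : 𝕜 → Matrix l m 𝕜} {N : 𝕜 → Matrix m n 𝕜}
    (hM : ∀ i j, DifferentiableOn 𝕜 (fun z => M z i j) s)
    (hN : ∀ i j, DifferentiableOn 𝕜 (fun z => N z i j) s) (i : l) (j : n) :
    DifferentiableOn 𝕜 (fun z => (M z * N z) i j) s := by
  simp only [mul_apply]
  exact .fun_sum fun k _ => (hM i k).mul (hN k j)

theorem differentiableOn_det [Fintype n] [DecidableEq n] {M : 𝕜 → Matrix n n 𝕜}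
    (hM : ∀ i j, DifferentiableOn 𝕜 (fun z => M z i j) s) :
    DifferentiableOn 𝕜 (fun z => (M z).det) s := by
  simp only [det_apply']
  exact .fun_sum fun σ _ => (differentiableOn_const _).mul (.fun_finsetProd fun i _ => hM (σ i) i)

theorem differentiableOn_inv_apply [Fintype n] [DecidableEq n] {M : 𝕜 → Matrix n n 𝕜}
    (hM : ∀ i j, DifferentiableOn 𝕜 (fun z => M z i j) s) (hdet : ∀ z ∈ s, (M z).det ≠ 0)
    (i j : n) : DifferentiableOn 𝕜 (fun z => (M z)⁻¹ i j) s := by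
  have hinv : ∀ z, (M z)⁻¹ i j = ((M z).det)⁻¹ * (M z).adjugate i j := fun z => by
    rw [inv_def, smul_apply, Ring.inverse_eq_inv', smul_eq_mul]
  simp only [hinv, adjugate_apply]
  refine ((differentiableOn_det hM).inv hdet).mul (differentiableOn_det fun a b => ?_)
  rcases eq_or_ne a j with rfl | haj
  · simp
  · simpa [updateRow_ne haj] using hM a b

end Matrix

theorem differentiableOn_qContinuation_apply {m n : Type*} [Fintype m] [Fintype n]
    [DecidableEq n] {q : 𝕜} {r : ℝ} {A : 𝕜 → Matrix n n 𝕜} {B : 𝕜 → Matrix m m 𝕜}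
    {F : 𝕜 → Matrix m n 𝕜} (hq : q ≠ 0)
    (hB : ∀ i j, DifferentiableOn 𝕜 (fun z => B z i j) {0}ᶜ)
    (hA : ∀ i j, DifferentiableOn 𝕜 (fun z => (A z)⁻¹ i j) {0}ᶜ)
    (hF : ∀ i j, DifferentiableOn 𝕜 (fun z => F z i j) (puncturedBall r)) (k : ℕ) (i : m)
    (j : n) :
    DifferentiableOn 𝕜 (fun z => qContinuation q (fun z M => B z * M * (A z)⁻¹) F k z i j)
      (puncturedBall (r * ‖q‖ ^ k)) := by
  induction k generalizing i j with
  | zero => simpa [qContinuation] using hF i j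
  | succ k ih =>
    have hsub := puncturedBall_subset_compl_zero (E := 𝕜) (r * ‖q‖ ^ k)
    have hstep := Matrix.differentiableOn_mul_apply
      (Matrix.differentiableOn_mul_apply (fun i j => (hB i j).mono hsub) ih)
      (fun i j => (hA i j).mono hsub) i j
    refine hstep.comp (differentiable_id.div_const q).differentiableOn fun z hz => ?_
    rw [pow_succ, ← mul_assoc] at hz
    exact div_mem_puncturedBall hq hz

end Holomorphy

theorem stmt6_general (q : ℂ) (hq : 1 < ‖q‖)
    (n p : ℕ)
    (A : ℂ → Matrix (Fin n) (Fin n) ℂ) (B : ℂ → Matrix (Fin p) (Fin p) ℂ)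
    (hA : ∀ i j, ∃ (s : Finset ℤ) (c : ℤ → ℂ),
      ∀ z : ℂ, z ≠ 0 → A z i j = ∑ k ∈ s, c k * z ^ k)
    (hB : ∀ i j, ∃ (s : Finset ℤ) (c : ℤ → ℂ),
      ∀ z : ℂ, z ≠ 0 → B z i j = ∑ k ∈ s, c k * z ^ k)
    (hAinv : ∀ z : ℂ, z ≠ 0 → IsUnit (A z).det)
    (r : ℝ) (hr : 0 < r)
    (F : ℂ → Matrix (Fin p) (Fin n) ℂ)
    (hF : ∀ i j, DifferentiableOn ℂ (fun z => F z i j)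
      {z : ℂ | 0 < ‖z‖ ∧ ‖z‖ < r})
    (hfe : ∀ z : ℂ, 0 < ‖z‖ → ‖q * z‖ < r →
      F (q * z) = B z * F z * (A z)⁻¹) :
    ∃ G : ℂ → Matrix (Fin p) (Fin n) ℂ,
      (∀ i j, DifferentiableOn ℂ (fun z => G z i j) {z : ℂ | z ≠ 0}) ∧
      (∀ z : ℂ, 0 < ‖z‖ → ‖z‖ < r → G z = F z) ∧
      (∀ z : ℂ, z ≠ 0 → G (q * z) = B z * G z * (A z)⁻¹) := by
  have hq0 : q ≠ 0 := norm_pos_iff.mp (one_pos.trans hq)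
  have hAinv_diff : ∀ i j, DifferentiableOn ℂ (fun z => (A z)⁻¹ i j) {0}ᶜ :=
    Matrix.differentiableOn_inv_apply
      (fun i j => differentiableOn_compl_zero_of_eq_laurent (hA i j))
      fun z hz => (hAinv z hz).ne_zero
  have hB_diff i j := differentiableOn_compl_zero_of_eq_laurent (hB i j)
  obtain ⟨G, hG⟩ := exists_eqOn_qContinuation (Φ := fun z M => B z * M * (A z)⁻¹) hq hr hfe
  refine ⟨G, fun i j => ?_, fun z hz hzr => hG 0 (by simpa using ⟨hz, hzr⟩),
    fun z hz => map_mul_eq_of_eqOn_qContinuation hq hr hG hz⟩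
  exact differentiableOn_of_eqOn_puncturedBall (fun _ => exists_mem_puncturedBall_mul_pow hq hr)
    (differentiableOn_qContinuation_apply hq0 hB_diff hAinv_diff hF · i j)
    fun k z hz => by rw [hG k hz]

/-- A matrix solution `F` of the `q`-difference equation `F(qz) = B(z) F(z) A(z)⁻¹`
(with `A`, `B` invertible Laurent-polynomial matrices and `|q| > 1`), holomorphic on a
punctured disk of radius `r` around `0`, extends holomorphically to all of `ℂ∖{0}` and
satisfies the functional equation there. -/
theorem stmt6 (q : ℂ) (hq : 1 < ‖q‖)
    (n p : ℕ) (hn : 0 < n) (hp : 0 < p)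
    (A : ℂ → Matrix (Fin n) (Fin n) ℂ) (B : ℂ → Matrix (Fin p) (Fin p) ℂ)
    (hA : ∀ i j, ∃ (s : Finset ℤ) (c : ℤ → ℂ),
      ∀ z : ℂ, z ≠ 0 → A z i j = ∑ k ∈ s, c k * z ^ k)
    (hB : ∀ i j, ∃ (s : Finset ℤ) (c : ℤ → ℂ),
      ∀ z : ℂ, z ≠ 0 → B z i j = ∑ k ∈ s, c k * z ^ k)
    (hAinv : ∀ z : ℂ, z ≠ 0 → IsUnit (A z).det)
    (hBinv : ∀ z : ℂ, z ≠ 0 → IsUnit (B z).det)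
    (r : ℝ) (hr : 0 < r)
    (F : ℂ → Matrix (Fin p) (Fin n) ℂ)
    (hF : ∀ i j, DifferentiableOn ℂ (fun z => F z i j)
      {z : ℂ | 0 < ‖z‖ ∧ ‖z‖ < r})
    (hfe : ∀ z : ℂ, 0 < ‖z‖ → ‖q * z‖ < r →
      F (q * z) = B z * F z * (A z)⁻¹) :
    ∃ G : ℂ → Matrix (Fin p) (Fin n) ℂ,
      (∀ i j, DifferentiableOn ℂ (fun z => G z i j) {z : ℂ | z ≠ 0}) ∧
      (∀ z : ℂ, 0 < ‖z‖ → ‖z‖ < r → G z = F z) ∧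
      (∀ z : ℂ, z ≠ 0 → G (q * z) = B z * G z * (A z)⁻¹) :=
  stmt6_general q hq n p A B hA hB hAinv r hr F hF hfe
end

section
/- Let q ∈ ℂ with |q| > 1 and r > 0. If f is a complex-valued function holomorphic on the punctured disk {z ∈ ℂ : 0 < |z| < r} and satisfies f(qz) = f(z) for every z with 0 < |z| and |qz| < r, then there exists a function g holomorphic on all of ℂ∖{0} such that g(z) = f(z) for 0 < |z| < r and g(qz) = g(z) for every z ≠ 0. -/
/-!
Every point `z ≠ 0` reaches the punctured disk of radius `r` along the orbit `z / qⁿ`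
and then stays in it, while `f` is constant on the part of the orbit inside the disk.
So `g z := f (z / qⁿ)`, for any `n` with `‖z / qⁿ‖ < r`, is well defined and `σ_q`-invariant,
and near each point it is a rescaling of `f`, hence holomorphic.
-/

open Filter Topology

section

variable {E : Type*}

/-- The exponent is the junk value `sInf ∅ = 0` when no `z / qⁿ` lies in the disk,
which happens only for `z = 0` or `r ≤ 0`. -/
noncomputable def qInvariantExtension (q : ℂ) (r : ℝ) (f : ℂ → E) (z : ℂ) : E :=
  f (z / q ^ sInf {n : ℕ | ‖z / q ^ n‖ < r})

variable {q : ℂ} {r : ℝ} {f : ℂ → E}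

lemma antitone_norm_div_pow (hq : 1 ≤ ‖q‖) (z : ℂ) : Antitone fun n : ℕ => ‖z / q ^ n‖ := by
  refine antitone_nat_of_succ_le fun n => ?_
  rw [pow_succ, ← div_div, norm_div _ q]
  exact div_le_self (norm_nonneg _) hq

lemma exists_norm_div_pow_lt (hq : 1 < ‖q‖) (hr : 0 < r) (z : ℂ) : ∃ n : ℕ, ‖z / q ^ n‖ < r := by
  obtain ⟨n, hn⟩ := pow_unbounded_of_one_lt (‖z‖ / r) hq
  refine ⟨n, ?_⟩
  rw [norm_div, norm_pow, div_lt_iff₀ (by positivity)]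
  rwa [div_lt_iff₀ hr, mul_comm] at hn

lemma apply_div_pow_eq_of_le (hq : 1 ≤ ‖q‖)
    (hfe : ∀ z : ℂ, 0 < ‖z‖ → ‖q * z‖ < r → f (q * z) = f z)
    {z : ℂ} (hz : z ≠ 0) {m n : ℕ} (hm : ‖z / q ^ m‖ < r) (hmn : m ≤ n) :
    f (z / q ^ n) = f (z / q ^ m) := by
  have hq0 : q ≠ 0 := norm_pos_iff.mp (zero_lt_one.trans_le hq)
  induction n, hmn using Nat.le_induction with
  | base => rfl
  | succ n hmn ih =>
    have hshift : q * (z / q ^ (n + 1)) = z / q ^ n := by field_simp; ring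
    rw [← ih, ← hfe _ (by simp [hz, hq0]) (hshift ▸ (antitone_norm_div_pow hq z hmn).trans_lt hm),
      hshift]

lemma qInvariantExtension_eq (hq : 1 ≤ ‖q‖)
    (hfe : ∀ z : ℂ, 0 < ‖z‖ → ‖q * z‖ < r → f (q * z) = f z)
    {z : ℂ} (hz : z ≠ 0) {n : ℕ} (hn : ‖z / q ^ n‖ < r) :
    qInvariantExtension q r f z = f (z / q ^ n) := by
  have hne : {k : ℕ | ‖z / q ^ k‖ < r}.Nonempty := ⟨n, hn⟩
  exact (apply_div_pow_eq_of_le hq hfe hz (Nat.sInf_mem hne) (Nat.sInf_le hn)).symm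

lemma qInvariantExtension_eq_self (hq : 1 ≤ ‖q‖)
    (hfe : ∀ z : ℂ, 0 < ‖z‖ → ‖q * z‖ < r → f (q * z) = f z) {z : ℂ} (hz : 0 < ‖z‖) (hzr : ‖z‖ < r) :
    qInvariantExtension q r f z = f z := by
  simpa using qInvariantExtension_eq (n := 0) hq hfe (norm_pos_iff.mp hz) (by simpa using hzr)

lemma qInvariantExtension_mul (hq : 1 < ‖q‖) (hr : 0 < r)
    (hfe : ∀ z : ℂ, 0 < ‖z‖ → ‖q * z‖ < r → f (q * z) = f z) {z : ℂ} (hz : z ≠ 0) :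
    qInvariantExtension q r f (q * z) = qInvariantExtension q r f z := by
  have hq0 : q ≠ 0 := norm_pos_iff.mp (zero_lt_one.trans hq)
  obtain ⟨n, hn⟩ := exists_norm_div_pow_lt hq hr z
  have hshift : q * z / q ^ (n + 1) = z / q ^ n := by field_simp; ring
  rw [qInvariantExtension_eq hq.le hfe (mul_ne_zero hq0 hz) (hshift ▸ hn), hshift,
    qInvariantExtension_eq hq.le hfe hz hn]

lemma differentiableOn_qInvariantExtension [NormedAddCommGroup E] [NormedSpace ℂ E]
    (hq : 1 < ‖q‖) (hr : 0 < r) (hfe : ∀ z : ℂ, 0 < ‖z‖ → ‖q * z‖ < r → f (q * z) = f z)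
    (hf : DifferentiableOn ℂ f {z : ℂ | 0 < ‖z‖ ∧ ‖z‖ < r}) :
    DifferentiableOn ℂ (qInvariantExtension q r f) {z : ℂ | z ≠ 0} := by
  have hq0 : q ≠ 0 := norm_pos_iff.mp (zero_lt_one.trans hq)
  have hdisk : IsOpen {z : ℂ | 0 < ‖z‖ ∧ ‖z‖ < r} :=
    (isOpen_lt continuous_const continuous_norm).inter (isOpen_lt continuous_norm continuous_const)
  intro z hz
  obtain ⟨n, hn⟩ := exists_norm_div_pow_lt hq hr z
  have hrescale : DifferentiableAt ℂ (fun w => f (w / q ^ n)) z :=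
    (hf.differentiableAt (hdisk.mem_nhds ⟨by simpa [hq0] using hz, hn⟩)).comp z (by fun_prop)
  have hnear : ∀ᶠ w in 𝓝 z, w ≠ 0 ∧ ‖w / q ^ n‖ < r :=
    (eventually_ne_nhds hz).and
      ((continuous_norm.comp (continuous_id.div_const _)).continuousAt.eventually (Iio_mem_nhds hn))
  refine (hrescale.congr_of_eventuallyEq ?_).differentiableWithinAt
  filter_upwards [hnear] with w hw
  exact qInvariantExtension_eq hq.le hfe hw.1 hw.2

end

/-- A holomorphic function on a punctured disk around `0` invariant under `z ↦ qz`
(with `|q| > 1`) extends to a `σ_q`-invariant holomorphic function on all of `ℂ∖{0}`. -/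
theorem stmt7 (q : ℂ) (hq : 1 < ‖q‖) (r : ℝ) (hr : 0 < r)
    (f : ℂ → ℂ)
    (hf : DifferentiableOn ℂ f {z : ℂ | 0 < ‖z‖ ∧ ‖z‖ < r})
    (hfe : ∀ z : ℂ, 0 < ‖z‖ → ‖q * z‖ < r → f (q * z) = f z) :
    ∃ g : ℂ → ℂ,
      DifferentiableOn ℂ g {z : ℂ | z ≠ 0} ∧
      (∀ z : ℂ, 0 < ‖z‖ → ‖z‖ < r → g z = f z) ∧
      (∀ z : ℂ, z ≠ 0 → g (q * z) = g z) :=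
  ⟨qInvariantExtension q r f, differentiableOn_qInvariantExtension hq hr hfe hf,
    fun _ hz hzr => qInvariantExtension_eq_self hq.le hfe hz hzr,
    fun _ hz => qInvariantExtension_mul hq hr hfe hz⟩
end

section
/- Let q ∈ ℂˣ with |q| > 1. Then there exist a ℚ-vector space L and an isomorphism of abelian groups between ℂˣ/q^ℤ and the product (ℚ/ℤ) × (ℚ/ℤ) × L (where the right-hand side carries the additive group structure). -/
/-!
Since `|q| ≠ 1`, the vectors `log q` and `2πi` form an `ℝ`-basis of `ℂ`, so
`(s, t) ↦ exp (s log q + 2πi t)` maps `ℝ²` onto `ℂˣ`, and the preimage of `q^ℤ` is exactly `ℤ²`.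
Hence `ℂˣ/q^ℤ ≅ (ℝ/ℤ)²`. Splitting `ℝ = ℚ ⊕ V` as `ℚ`-vector spaces gives `ℝ/ℤ ≅ ℚ/ℤ × V`,
and one takes `L = V × V`.
-/

open Complex
open scoped Real

theorem AddSubgroup.zmultiples_mk_zero {A B : Type*} [AddCommGroup A] [AddCommGroup B] (a : A) :
    AddSubgroup.zmultiples ((a, 0) : A × B) = (AddSubgroup.zmultiples a).prod ⊥ := by
  ext ⟨x, y⟩
  simp [AddSubgroup.mem_zmultiples_iff, AddSubgroup.mem_prod, eq_comm]

theorem exists_quotient_zmultiples_addEquiv {K M : Type*} [DivisionRing K] [AddCommGroup M]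
    [Module K M] {x : M} (hx : x ≠ 0) :
    ∃ V : Submodule K M,
      Nonempty (M ⧸ AddSubgroup.zmultiples x ≃+ (K ⧸ AddSubgroup.zmultiples (1 : K)) × V) := by
  obtain ⟨V, hV⟩ := Submodule.exists_isCompl (K ∙ x)
  let e : (K × V) ≃ₗ[K] M :=
    ((LinearEquiv.toSpanNonzeroSingleton K M x hx).prodCongr (LinearEquiv.refl K V)).trans
      (Submodule.prodEquivOfIsCompl _ _ hV)
  have he : (AddSubgroup.zmultiples ((1 : K), (0 : V))).map e.toAddMonoidHom =
      AddSubgroup.zmultiples x := by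
    rw [AddMonoidHom.map_zmultiples]
    simp [e]
  refine ⟨V, ⟨(QuotientAddGroup.congr _ _ e.toAddEquiv he).symm.trans ?_⟩⟩
  rw [AddSubgroup.zmultiples_mk_zero]
  exact (QuotientAddGroup.prodAddEquiv _ _).trans
    ((AddEquiv.refl _).prodCongr QuotientAddGroup.quotientBot)

namespace Complex

theorem log_re_ne_zero {z : ℂ} (hz : z ≠ 0) (h : ‖z‖ ≠ 1) : (log z).re ≠ 0 := by
  rw [log_re]
  exact Real.log_ne_zero_of_pos_of_ne_one (norm_pos_iff.2 hz) h

theorem exists_real_mul_add_real_mul_two_pi_I_eq {ℓ : ℂ} (hℓ : ℓ.re ≠ 0) (z : ℂ) :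
    ∃ s t : ℝ, s * ℓ + t * (2 * π * I) = z := by
  set s : ℝ := z.re / ℓ.re with hs
  set t : ℝ := (z.im - s * ℓ.im) / (2 * π) with ht
  refine ⟨s, t, Complex.ext ?_ ?_⟩ <;> simp
  · rw [hs]
    field_simp
  · rw [ht]
    field_simp
    ring

theorem real_mul_add_real_mul_two_pi_I_inj {ℓ : ℂ} (hℓ : ℓ.re ≠ 0) {s t s' t' : ℝ} :
    s * ℓ + t * (2 * π * I) = s' * ℓ + t' * (2 * π * I) ↔ s = s' ∧ t = t' := by
  refine ⟨fun h ↦ ?_, fun ⟨rfl, rfl⟩ ↦ rfl⟩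
  have hs : s = s' := by simpa [hℓ] using congrArg re h
  subst hs
  simpa [Real.pi_ne_zero] using congrArg im h

noncomputable def expLogHom (q : ℂˣ) : ℝ × ℝ →+ Additive ℂˣ where
  toFun p := .ofMul (Units.mk0 (exp (p.1 * log q + p.2 * (2 * π * I))) (exp_ne_zero _))
  map_zero' := by
    apply Additive.toMul.injective
    ext
    simp
  map_add' p p' := by
    apply Additive.toMul.injective
    ext
    simp only [Prod.fst_add, Prod.snd_add, ofReal_add, toMul_add, toMul_ofMul, Units.val_mul,
      Units.val_mk0, ← exp_add]
    ring_nf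

theorem expLogHom_surjective {q : ℂˣ} (hq : ‖(q : ℂ)‖ ≠ 1) :
    Function.Surjective (expLogHom q) := by
  intro u
  obtain ⟨s, t, hst⟩ :=
    exists_real_mul_add_real_mul_two_pi_I_eq (log_re_ne_zero q.ne_zero hq) (log (u.toMul : ℂ))
  refine ⟨(s, t), Additive.toMul.injective (Units.ext ?_)⟩
  simp [expLogHom, hst, exp_log]

noncomputable def expLogModZPowers (q : ℂˣ) : ℝ × ℝ →+ Additive (ℂˣ ⧸ Subgroup.zpowers q) :=
  (QuotientGroup.mk' _).toAdditive.comp (expLogHom q)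

theorem expLogModZPowers_surjective {q : ℂˣ} (hq : ‖(q : ℂ)‖ ≠ 1) :
    Function.Surjective (expLogModZPowers q) :=
  (QuotientGroup.mk'_surjective _).comp (expLogHom_surjective hq)

theorem ker_expLogModZPowers {q : ℂˣ} (hq : ‖(q : ℂ)‖ ≠ 1) :
    (expLogModZPowers q).ker =
      (AddSubgroup.zmultiples (1 : ℝ)).prod (AddSubgroup.zmultiples 1) := by
  ext ⟨s, t⟩
  have hpow (n : ℤ) : ((q ^ n : ℂˣ) : ℂ) = exp (n * log q) := by simp [exp_int_mul, exp_log]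
  have hval : ((Additive.toMul (expLogHom q (s, t)) : ℂˣ) : ℂ) =
      exp (s * log q + t * (2 * π * I)) := rfl
  simp only [AddMonoidHom.mem_ker, AddSubgroup.mem_prod, AddSubgroup.mem_zmultiples_iff,
    zsmul_eq_mul, mul_one]
  change QuotientGroup.mk _ = (1 : ℂˣ ⧸ Subgroup.zpowers q) ↔ _
  rw [QuotientGroup.eq_one_iff, Subgroup.mem_zpowers_iff]
  constructor
  · rintro ⟨n, hn⟩
    have hexp := congrArg Units.val hn
    rw [hpow, hval, eq_comm, exp_eq_exp_iff_exists_int] at hexp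
    obtain ⟨m, hm⟩ := hexp
    have hst := (real_mul_add_real_mul_two_pi_I_inj (log_re_ne_zero q.ne_zero hq)
      (s' := n) (t' := m)).1 (by rw [hm]; push_cast; ring)
    exact ⟨⟨n, hst.1.symm⟩, ⟨m, hst.2.symm⟩⟩
  · rintro ⟨⟨n, rfl⟩, ⟨m, rfl⟩⟩
    refine ⟨n, Units.ext ?_⟩
    rw [hpow, hval, exp_eq_exp_iff_exists_int]
    exact ⟨-m, by push_cast; ring⟩

noncomputable def quotientZPowersAddEquiv {q : ℂˣ} (hq : ‖(q : ℂ)‖ ≠ 1) :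
    Additive (ℂˣ ⧸ Subgroup.zpowers q) ≃+
      (ℝ ⧸ AddSubgroup.zmultiples (1 : ℝ)) × (ℝ ⧸ AddSubgroup.zmultiples (1 : ℝ)) :=
  (QuotientAddGroup.quotientKerEquivOfSurjective (H := Additive (ℂˣ ⧸ Subgroup.zpowers q)) _
      (expLogModZPowers_surjective hq)).symm.trans <|
    (QuotientAddGroup.quotientAddEquivOfEq (ker_expLogModZPowers hq)).trans
      (QuotientAddGroup.prodAddEquiv _ _)

end Complex

/-- For `|q| > 1`, the group `E_q = ℂˣ/q^ℤ` is isomorphic (as an abelian group) to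
`(ℚ/ℤ) × (ℚ/ℤ) × L` for some ℚ-vector space `L`. -/
theorem stmt9 (q : ℂˣ) (hq : 1 < ‖(q : ℂ)‖) :
    ∃ (L : Type) (_ : AddCommGroup L) (_ : Module ℚ L),
      Nonempty (Additive (ℂˣ ⧸ Subgroup.zpowers q) ≃+
        ((ℚ ⧸ AddSubgroup.zmultiples (1 : ℚ)) ×
          (ℚ ⧸ AddSubgroup.zmultiples (1 : ℚ)) × L)) := by
  obtain ⟨V, ⟨e⟩⟩ := exists_quotient_zmultiples_addEquiv (K := ℚ) (one_ne_zero : (1 : ℝ) ≠ 0)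
  exact ⟨V × V, inferInstance, inferInstance, ⟨(quotientZPowersAddEquiv hq.ne').trans <|
    (e.prodCongr e).trans <| (AddEquiv.prodProdProdComm _ _ _ _).trans AddEquiv.prodAssoc⟩⟩
end

section
/- Let q ∈ ℂˣ with |q| > 1, let p₁, p₂ be positive integers and ν a nonnegative integer. Then there exists a surjective group homomorphism from Hom(ℂˣ/q^ℤ, ℂˣ) (the group of all abstract group homomorphisms ℂˣ/q^ℤ → ℂˣ, under pointwise multiplication) onto (ℤ/p₁ℤ) × (ℤ/p₂ℤ) × (ℂˣ)^ν. -/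
/-!
Since `ℂˣ` is divisible, `Hom(-, ℂˣ)` turns injections into surjections (Baer's criterion), and
`Hom(ℤ/p₁ × ℤ/p₂ × ℤ^ν, ℂˣ) ≅ ℤ/p₁ × ℤ/p₂ × (ℂˣ)^ν` because a finite abelian group is isomorphic
to its dual. So it suffices to embed `ℤ/p₁ × ℤ/p₂ × ℤ^ν` into `E_q`. Send the generators to a
primitive `p₁`-th root of unity `ζ`, a `p₂`-th root `a` of `q`, and the positive reals
`bᵢ = |q|^(θ^i)`, `1 ≤ i ≤ ν`, for a transcendental `θ`. Taking `log |·|` of a relation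
`ζ^j a^k ∏ bᵢ^wᵢ = q^m` gives `k / p₂ + ∑ wᵢ θ^i = m`, which forces `w = 0` and `p₂ ∣ k`;
then `ζ^j = 1`, so `p₁ ∣ j`.
-/

open Function Multiplicative

noncomputable section

section Divisible

variable {D : Type*} [CommGroup D]

instance Additive.instDivisibleByInt [RootableBy D ℤ] : DivisibleBy (Additive D) ℤ where
  div a n := ofMul (RootableBy.root a.toMul n)
  div_zero a := congrArg Additive.ofMul (RootableBy.root_zero a.toMul)
  div_cancel a hn := congrArg Additive.ofMul (RootableBy.root_cancel a.toMul hn)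

theorem MonoidHom.compHom'_surjective [RootableBy D ℤ] {A B : Type*} [CommGroup A] [CommGroup B]
    {f : A →* B} (hf : Injective f) : Surjective (f.compHom' : (B →* D) →* A →* D) := by
  intro g
  obtain ⟨h, hh⟩ := (Module.Baer.of_divisible (Additive D)).extension_property_addMonoidHom
    f.toAdditive hf g.toAdditive
  exact ⟨MonoidHom.toAdditive.symm h,
    MonoidHom.ext fun a => congr(Additive.toMul ($hh (Additive.ofMul a)))⟩

instance IsAlgClosed.instRootableByUnitsNat (K : Type*) [Field K] [IsAlgClosed K] :
    RootableBy Kˣ ℕ :=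
  rootableByOfPowLeftSurj _ _ fun {n} hn z => by
    obtain ⟨y, hy⟩ := IsAlgClosed.exists_pow_nat_eq (z : K) (Nat.pos_of_ne_zero hn)
    have hy0 : y ≠ 0 := by rintro rfl; exact z.ne_zero (by simp [← hy, hn])
    exact ⟨Units.mk0 y hy0, Units.ext hy⟩

instance IsAlgClosed.instRootableByUnitsInt (K : Type*) [Field K] [IsAlgClosed K] :
    RootableBy Kˣ ℤ :=
  Group.rootableByIntOfRootableByNat _

end Divisible

theorem MonoidHom.prod_compHom'_inl_inr_surjective {M N P : Type*} [CommGroup M] [CommGroup N]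
    [CommGroup P] :
    Surjective ((inl M N).compHom'.prod (inr M N).compHom' : (M × N →* P) →* _) :=
  fun fg => ⟨fg.1.coprod fg.2, by ext <;> simp⟩

theorem exists_surjective_monoidHom_prod_pi_int (F ι M : Type*) [CommGroup F] [Finite F]
    [Fintype ι] [DecidableEq ι] [CommMonoid M] [HasEnoughRootsOfUnity M (Monoid.exponent F)] :
    ∃ ρ : ((F × (ι → Multiplicative ℤ)) →* Mˣ) →* F × (ι → Mˣ), Surjective ρ := by
  obtain ⟨e⟩ := CommGroup.monoidHom_mulEquiv_of_hasEnoughRootsOfUnity F M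
  let e' : ((ι → Multiplicative ℤ) →* Mˣ) ≃* (ι → Mˣ) :=
    (Pi.monoidHomMulEquiv _ _).trans (MulEquiv.piCongrRight fun _ => (zpowersMulHom Mˣ).symm)
  exact ⟨(e.toMonoidHom.prodMap e'.toMonoidHom).comp
      ((MonoidHom.inl _ _).compHom'.prod (MonoidHom.inr _ _).compHom'),
    (Prod.map_surjective.mpr ⟨e.surjective, e'.surjective⟩).comp
      MonoidHom.prod_compHom'_inl_inr_surjective⟩

section ZModHom

variable {G : Type*} [Group G] {p : ℕ}

def zmodHom (t : G) (ht : t ^ p = 1) : Multiplicative (ZMod p) →* G :=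
  AddMonoidHom.toMultiplicativeLeft (ZMod.lift p
    ⟨zmultiplesHom (Additive G) (Additive.ofMul t), by simpa using congrArg Additive.ofMul ht⟩)

theorem zmodHom_ofAdd_intCast (t : G) (ht : t ^ p = 1) (j : ℤ) :
    zmodHom t ht (ofAdd (j : ZMod p)) = t ^ j := by
  simp [zmodHom, ZMod.lift_coe]

end ZModHom

section Lattice

variable {G : Type*} [CommGroup G] {p₁ p₂ : ℕ} {ι : Type*} [Fintype ι] [DecidableEq ι]

def latticeHom (t₁ t₂ : G) (h₁ : t₁ ^ p₁ = 1) (h₂ : t₂ ^ p₂ = 1) (b : ι → G) :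
    (Multiplicative (ZMod p₁) × Multiplicative (ZMod p₂)) × (ι → Multiplicative ℤ) →* G :=
  ((zmodHom t₁ h₁).coprod (zmodHom t₂ h₂)).coprod
    ((Pi.monoidHomMulEquiv _ G).symm fun i => zpowersHom G (b i))

theorem latticeHom_apply (t₁ t₂ : G) (h₁ : t₁ ^ p₁ = 1) (h₂ : t₂ ^ p₂ = 1) (b : ι → G)
    (j k : ℤ) (w : ι → ℤ) :
    latticeHom t₁ t₂ h₁ h₂ b ((ofAdd (j : ZMod p₁), ofAdd (k : ZMod p₂)), fun i => ofAdd (w i)) =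
      t₁ ^ j * t₂ ^ k * ∏ i, b i ^ w i := by
  simp [latticeHom, zmodHom_ofAdd_intCast, Pi.monoidHomMulEquiv, MonoidHom.finsetProd_apply]

theorem latticeHom_injective {t₁ t₂ : G} (h₁ : t₁ ^ p₁ = 1) (h₂ : t₂ ^ p₂ = 1) {b : ι → G}
    (H : ∀ (j k : ℤ) (w : ι → ℤ), t₁ ^ j * t₂ ^ k * ∏ i, b i ^ w i = 1 →
      (p₁ : ℤ) ∣ j ∧ (p₂ : ℤ) ∣ k ∧ w = 0) :
    Injective (latticeHom t₁ t₂ h₁ h₂ b) := by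
  refine (injective_iff_map_eq_one _).mpr fun ⟨⟨x, y⟩, w⟩ hxyw => ?_
  obtain ⟨j, rfl⟩ := ZMod.intCast_surjective x.toAdd
  obtain ⟨k, rfl⟩ := ZMod.intCast_surjective y.toAdd
  obtain ⟨hj, hk, hw⟩ := H j k (fun i => (w i).toAdd) (by
    rw [← latticeHom_apply]; exact hxyw)
  rw [(ZMod.intCast_zmod_eq_zero_iff_dvd j p₁).mpr hj,
    (ZMod.intCast_zmod_eq_zero_iff_dvd k p₂).mpr hk]
  exact Prod.ext rfl (funext fun i => congrFun hw i)

end Lattice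

theorem Transcendental.linearIndependent_pow {R A : Type*} [CommRing R] [Ring A] [Algebra R A]
    {x : A} (hx : Transcendental R x) : LinearIndependent R (fun n : ℕ => x ^ n) := by
  have := (Polynomial.basisMonomials R).linearIndependent.map'
    (Polynomial.aeval x).toLinearMap
    (LinearMap.ker_eq_bot.mpr (transcendental_iff_injective.mp hx))
  simpa [Function.comp_def] using this

theorem Transcendental.eq_zero_of_smul_one_add_sum_smul_pow_succ {R A : Type*} [CommRing R]
    [Ring A] [Algebra R A] {x : A} (hx : Transcendental R x) {ν : ℕ} {c : R} {w : Fin ν → R}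
    (h : c • (1 : A) + ∑ i, w i • x ^ ((i : ℕ) + 1) = 0) : c = 0 ∧ w = 0 := by
  have hli := Fintype.linearIndependent_iff.mp
    (hx.linearIndependent_pow.comp (Fin.val : Fin (ν + 1) → ℕ) Fin.val_injective) (Fin.cons c w)
    (by simpa [Fin.sum_univ_succ] using h)
  exact ⟨hli 0, funext fun i => hli i.succ⟩

def rpowNormUnit (q : ℂˣ) (s : ℝ) : ℂˣ :=
  Units.mk0 ((‖(q : ℂ)‖ ^ s : ℝ) : ℂ)
    (by exact_mod_cast (Real.rpow_pos_of_pos (norm_pos_iff.mpr q.ne_zero) s).ne')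

def logNormHom : ℂˣ →* Multiplicative ℝ where
  toFun z := ofAdd (Real.log ‖(z : ℂ)‖)
  map_one' := by simp
  map_mul' x y := by simp [Real.log_mul, ← ofAdd_add]

theorem toAdd_logNormHom (z : ℂˣ) : (logNormHom z).toAdd = Real.log ‖(z : ℂ)‖ := rfl

theorem toAdd_logNormHom_rpowNormUnit (q : ℂˣ) (s : ℝ) :
    (logNormHom (rpowNormUnit q s)).toAdd = s * (logNormHom q).toAdd := by
  rw [toAdd_logNormHom, toAdd_logNormHom, rpowNormUnit, Units.val_mk0, Complex.norm_real,
    Real.norm_of_nonneg (by positivity), Real.log_rpow (norm_pos_iff.mpr q.ne_zero)]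

theorem intCast_add_mul_sum_eq_of_mul_prod_eq_zpow {ζ a q : ℂˣ} {p₂ : ℕ} (hζ : ‖(ζ : ℂ)‖ = 1)
    (ha : a ^ p₂ = q) (hq : 1 < ‖(q : ℂ)‖) {ν : ℕ} {j k m : ℤ} {s : Fin ν → ℝ} {w : Fin ν → ℤ}
    (h : ζ ^ j * a ^ k * ∏ i, rpowNormUnit q (s i) ^ w i = q ^ m) :
    (k : ℝ) + p₂ * ∑ i, w i * s i = p₂ * m := by
  have hlog := congrArg (fun z => (logNormHom z).toAdd) h
  simp only [map_mul, map_zpow, map_prod, toAdd_mul, toAdd_zpow, toAdd_prod,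
    toAdd_logNormHom_rpowNormUnit] at hlog
  have ha' : p₂ * (logNormHom a).toAdd = (logNormHom q).toAdd := by
    rw [← ha, map_pow, toAdd_pow, nsmul_eq_mul]
  have hL : 0 < (logNormHom q).toAdd := Real.log_pos hq
  rw [toAdd_logNormHom ζ, hζ, Real.log_one, smul_zero, zero_add] at hlog
  apply mul_right_cancel₀ hL.ne'
  simp only [zsmul_eq_mul, ← mul_assoc, ← Finset.sum_mul] at hlog
  linear_combination (p₂ : ℝ) * hlog - k * ha'

theorem dvd_and_eq_zero_of_mul_prod_eq_zpow {θ : ℝ} (hθ : Transcendental ℤ θ) {q ζ a : ℂˣ}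
    (hq : 1 < ‖(q : ℂ)‖) {p₁ p₂ : ℕ} (hp₁ : p₁ ≠ 0) (hζ : IsPrimitiveRoot ζ p₁) (ha : a ^ p₂ = q)
    {ν : ℕ} {j k m : ℤ} {w : Fin ν → ℤ}
    (h : ζ ^ j * a ^ k * ∏ i : Fin ν, rpowNormUnit q (θ ^ ((i : ℕ) + 1)) ^ w i = q ^ m) :
    (p₁ : ℤ) ∣ j ∧ (p₂ : ℤ) ∣ k ∧ w = 0 := by
  have hp₂ : p₂ ≠ 0 := by rintro rfl; simp [← ha] at hq
  have hrel := intCast_add_mul_sum_eq_of_mul_prod_eq_zpow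
    ((IsPrimitiveRoot.coe_units_iff.mpr hζ).norm'_eq_one hp₁) ha hq h
  obtain ⟨hkm, hw⟩ :=
    hθ.eq_zero_of_smul_one_add_sum_smul_pow_succ (c := k - p₂ * m) (w := p₂ • w)
    (by simp only [zsmul_eq_mul, Pi.smul_apply, nsmul_eq_mul, Int.cast_mul, Int.cast_natCast,
      mul_assoc, ← Finset.mul_sum]; push_cast; linear_combination hrel)
  have hw0 : w = 0 := funext fun i => by simpa [hp₂] using congrFun hw i
  have hk : k = p₂ * m := by linarith
  refine ⟨?_, ⟨m, hk⟩, hw0⟩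
  rw [hw0, hk, zpow_mul, zpow_natCast, ha] at h
  exact (hζ.zpow_eq_one_iff_dvd j).mp (by simpa using h)

theorem exists_injective_monoidHom_quotient_zpowers {q : ℂˣ} (hq : 1 < ‖(q : ℂ)‖) {p₁ p₂ : ℕ}
    (hp₁ : p₁ ≠ 0) (hp₂ : p₂ ≠ 0) (ν : ℕ) :
    ∃ ψ : (Multiplicative (ZMod p₁) × Multiplicative (ZMod p₂)) × (Fin ν → Multiplicative ℤ) →*
      ℂˣ ⧸ Subgroup.zpowers q, Injective ψ := by
  obtain ⟨ζ, hζ⟩ : ∃ ζ : ℂˣ, IsPrimitiveRoot ζ p₁ :=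
    ⟨_, (Complex.isPrimitiveRoot_exp p₁ hp₁).isUnit_unit hp₁⟩
  set a := RootableBy.root q p₂
  have ha : a ^ p₂ = q := RootableBy.root_cancel q hp₂
  let π := QuotientGroup.mk' (Subgroup.zpowers q)
  have h₁ : π ζ ^ p₁ = 1 := by rw [← map_pow, hζ.pow_eq_one, map_one]
  have h₂ : π a ^ p₂ = 1 := by
    rw [← map_pow, ha]
    exact (QuotientGroup.eq_one_iff q).mpr (Subgroup.mem_zpowers q)
  refine ⟨latticeHom (π ζ) (π a) h₁ h₂
    fun i : Fin ν => π (rpowNormUnit q (liouvilleNumber 3 ^ ((i : ℕ) + 1))),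
    latticeHom_injective h₁ h₂ fun j k w h => ?_⟩
  have hmem : ζ ^ j * a ^ k *
      ∏ i : Fin ν, rpowNormUnit q (liouvilleNumber 3 ^ ((i : ℕ) + 1)) ^ w i ∈
        Subgroup.zpowers q := by
    rw [← QuotientGroup.eq_one_iff]
    simpa [π] using h
  obtain ⟨m, hm⟩ := Subgroup.mem_zpowers_iff.mp hmem
  exact dvd_and_eq_zero_of_mul_prod_eq_zpow (transcendental_liouvilleNumber (by norm_num : 2 ≤ 3))
    hq hp₁ hζ ha hm.symm

end

/-- For `|q| > 1`, positive integers `p₁, p₂` and `ν ≥ 0`, there is a surjective group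
homomorphism from `Hom(ℂˣ/q^ℤ, ℂˣ)` onto `(ℤ/p₁ℤ) × (ℤ/p₂ℤ) × (ℂˣ)^ν`. -/
theorem stmt10 (q : ℂˣ) (hq : 1 < ‖(q : ℂ)‖)
    (p₁ p₂ : ℕ) (hp₁ : 0 < p₁) (hp₂ : 0 < p₂) (ν : ℕ) :
    ∃ φ : ((ℂˣ ⧸ Subgroup.zpowers q) →* ℂˣ) →*
        (Multiplicative (ZMod p₁) × Multiplicative (ZMod p₂) × (Fin ν → ℂˣ)),
      Function.Surjective φ := by
  have : NeZero p₁ := ⟨hp₁.ne'⟩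
  have : NeZero p₂ := ⟨hp₂.ne'⟩
  have : NeZero (Monoid.exponent (Multiplicative (ZMod p₁) × Multiplicative (ZMod p₂))) :=
    ⟨Monoid.exponent_ne_zero_of_finite⟩
  obtain ⟨ψ, hψ⟩ := exists_injective_monoidHom_quotient_zpowers hq hp₁.ne' hp₂.ne' ν
  obtain ⟨ρ, hρ⟩ := exists_surjective_monoidHom_prod_pi_int
    (Multiplicative (ZMod p₁) × Multiplicative (ZMod p₂)) (Fin ν) ℂ
  refine ⟨(MulEquiv.prodAssoc ..).toMonoidHom.comp (ρ.comp ψ.compHom'), ?_⟩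
  exact (MulEquiv.prodAssoc ..).surjective.comp
    (hρ.comp (MonoidHom.compHom'_surjective (B := ℂˣ ⧸ Subgroup.zpowers q) hψ))
end

section
/- Let G be a group, V a finite-dimensional complex vector space, and ρ : G → GL(V) a group homomorphism. Let I be an index set and, for each i ∈ I, let ρ_i : G → ℂˣ be a group homomorphism and x_i ∈ End(V) an endomorphism satisfying ρ(g) ∘ x_i ∘ ρ(g)⁻¹ = ρ_i(g) · x_i for all g ∈ G. Assume that for every group homomorphism χ : G → ℂˣ, the set {i ∈ I : ρ_i = χ} is finite. Then the set {i ∈ I : x_i ≠ 0} is finite. -/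
/-!
Conjugation by `ρ` makes `End(V)` a representation of `G` in which each `xᵢ` is a weight vector
of weight `ρᵢ`. Nonzero weight vectors of distinct weights are linearly independent (apply a
linear functional and use Dedekind's independence of characters), so only finitely many
characters carry a nonzero `xᵢ`, and each of them carries only finitely many indices.
-/

section WeightVectors

variable {G K M ι : Type*} [Monoid G] [Field K] [AddCommGroup M] [Module K M]
  (T : G → M →ₗ[K] M) (χ : ι → G →* K) (v : ι → M)

theorem linearIndependent_of_apply_eq_character_smul (hχ : Function.Injective χ)
    (hv : ∀ i, v i ≠ 0) (hT : ∀ i g, T g (v i) = χ i g • v i) : LinearIndependent K v := by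
  rw [linearIndependent_iff']
  intro s c hsum j hj
  have hχ_indep : LinearIndependent K (fun i => (χ i : G → K)) :=
    (linearIndependent_monoidHom G K).comp χ hχ
  have hdual : ∀ φ : Module.Dual K M, c j * φ (v j) = 0 := by
    intro φ
    refine linearIndependent_iff'.mp hχ_indep s (fun k => c k * φ (v k)) ?_ j hj
    funext g
    have := congrArg (φ ∘ T g) hsum
    simpa [map_sum, hT, mul_comm, mul_left_comm] using this
  have hsmul : c j • v j = 0 := by
    rw [← Module.forall_dual_apply_eq_zero_iff K]
    simpa using hdual
  exact (smul_eq_zero.mp hsmul).resolve_right (hv j)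

theorem finite_ne_zero_of_apply_eq_character_smul [FiniteDimensional K M]
    (hT : ∀ i g, T g (v i) = χ i g • v i) (hfin : ∀ ψ : G →* K, {i | χ i = ψ}.Finite) :
    {i | v i ≠ 0}.Finite := by
  have hweights : ∀ ψ : χ '' {i | v i ≠ 0}, ∃ i, v i ≠ 0 ∧ χ i = ψ := by
    rintro ⟨_, i, hi, rfl⟩
    exact ⟨i, hi, rfl⟩
  choose rep hrep_ne hrep_eq using hweights
  have hindep : LinearIndependent K (v ∘ rep) := by
    refine linearIndependent_of_apply_eq_character_smul T (χ ∘ rep) _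
      (fun ψ ψ' h => Subtype.ext ?_) hrep_ne (fun ψ g => hT (rep ψ) g)
    simpa only [Function.comp_apply, hrep_eq] using h
  have : Finite (χ '' {i | v i ≠ 0}) := hindep.finite
  refine ((Set.toFinite (χ '' {i | v i ≠ 0})).biUnion fun ψ _ => hfin ψ).subset ?_
  intro i hi
  exact Set.mem_biUnion ⟨i, hi, rfl⟩ rfl

end WeightVectors

/-- Given a representation `ρ : G → GL(V)` on a finite-dimensional complex vector space,
characters `ρᵢ : G → ℂˣ` and endomorphisms `xᵢ` with `ρ(g) xᵢ ρ(g)⁻¹ = ρᵢ(g) • xᵢ`, if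
each character has only finitely many indices attached to it, then only finitely many
`xᵢ` are nonzero. -/
theorem stmt12 (G : Type) [Group G]
    (V : Type) [AddCommGroup V] [Module ℂ V] [FiniteDimensional ℂ V]
    (ρ : G →* (Module.End ℂ V)ˣ)
    (I : Type) (ρi : I → (G →* ℂˣ)) (x : I → Module.End ℂ V)
    (hx : ∀ (i : I) (g : G),
      (ρ g : Module.End ℂ V) * x i * ((ρ g)⁻¹ : (Module.End ℂ V)ˣ) =
        ((ρi i g : ℂ)) • x i)
    (hfin : ∀ χ : G →* ℂˣ, {i : I | ρi i = χ}.Finite) :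
    {i : I | x i ≠ 0}.Finite := by
  let conj : G → Module.End ℂ V →ₗ[ℂ] Module.End ℂ V := fun g =>
    LinearMap.mulRight ℂ ((ρ g)⁻¹ : (Module.End ℂ V)ˣ).val ∘ₗ LinearMap.mulLeft ℂ (ρ g).val
  have hcoe : Function.Injective ((Units.coeHom ℂ).comp : (G →* ℂˣ) → G →* ℂ) :=
    fun χ χ' h => MonoidHom.ext fun g => Units.ext (DFunLike.congr_fun h g)
  refine finite_ne_zero_of_apply_eq_character_smul conj (fun i => (Units.coeHom ℂ).comp (ρi i)) x
    hx fun ψ => ?_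
  have hfibre : {χ : G →* ℂˣ | (Units.coeHom ℂ).comp χ = ψ}.Subsingleton :=
    fun _ h _ h' => hcoe (h.trans h'.symm)
  exact hfibre.finite.preimage' fun χ _ => hfin χ
end

section
/- Let X be a type and let L be the free Lie algebra over ℂ on X. Define the lower central series of L by L¹ = L and L^{n+1} = [L, L^n]. Then ⋂_{n ≥ 1} L^n = 0; that is, the free Lie algebra is residually nilpotent, so the natural map from L to its pronilpotent completion (the inverse limit of the nilpotent quotients L/L^n) is injective. -/
/-!
Scaling every generator by `c` is a Lie algebra endomorphism of the free Lie algebra, and it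
multiplies the image of a magma word of length `n` by `c ^ n`. Since the field is infinite, comparing
coefficients of the resulting polynomial identities in `c` shows that two elements of the free
magma algebra with the same image in the free Lie algebra have homogeneous components with the
same images, i.e. the free Lie algebra is graded by word length. The `k`-th term of the lower
central series consists of images of words of length greater than `k`, so an element lying in all
of them has zero image in every degree.
-/

open Finset MonoidAlgebra

theorem Module.eq_zero_of_forall_sum_pow_smul_eq_zero {R M : Type*} [CommRing R] [IsDomain R]
    [Infinite R] [AddCommGroup M] [Module R M] [Module.Projective R M] {N : ℕ} {v : ℕ → M}
    (h : ∀ c : R, ∑ n ∈ range N, c ^ n • v n = 0) {n : ℕ} (hn : n < N) : v n = 0 := by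
  refine (Module.forall_dual_apply_eq_zero_iff R (v n)).mp fun φ => ?_
  have hp : ∑ i ∈ range N, Polynomial.monomial i (φ (v i)) = 0 := by
    refine Polynomial.funext fun c => ?_
    simpa [Polynomial.eval_finsetSum, mul_comm] using congrArg φ (h c)
  simpa [Polynomial.finsetSum_coeff, Polynomial.coeff_monomial, hn] using
    congrArg (Polynomial.coeff · n) hp

namespace FreeNonUnitalNonAssocAlgebra

variable (R : Type*) {X : Type*} [CommRing R]

variable (X) in
noncomputable def lengthGE (k : ℕ) : Submodule R (FreeNonUnitalNonAssocAlgebra R X) :=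
  supported R R {w | k ≤ w.length}

variable {R}

theorem mem_lengthGE {k : ℕ} {a : FreeNonUnitalNonAssocAlgebra R X} :
    a ∈ lengthGE R X k ↔ ∀ w ∈ a.coeff.support, k ≤ w.length :=
  Iff.rfl

theorem mem_lengthGE_one (a : FreeNonUnitalNonAssocAlgebra R X) : a ∈ lengthGE R X 1 :=
  mem_lengthGE.mpr fun w _ => w.length_pos

theorem lengthGE_antitone : Antitone (lengthGE R X) :=
  fun _ _ hij => supported_mono fun _ hw => le_trans hij hw

theorem mul_mem_lengthGE {i j : ℕ} {a b : FreeNonUnitalNonAssocAlgebra R X}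
    (ha : a ∈ lengthGE R X i) (hb : b ∈ lengthGE R X j) : a * b ∈ lengthGE R X (i + j) := by
  classical
  rw [mem_lengthGE] at ha hb ⊢
  intro w hw
  obtain ⟨u, hu, v, hv, rfl⟩ := Finset.mem_mul.mp (support_coeff_mul_subset a b hw)
  simpa using add_le_add (ha u hu) (hb v hv)

noncomputable def lengthComponent (n : ℕ) (a : FreeNonUnitalNonAssocAlgebra R X) :
    FreeNonUnitalNonAssocAlgebra R X :=
  ofCoeff (a.coeff.filter (·.length = n))

theorem sum_lengthComponent {N : ℕ} {a : FreeNonUnitalNonAssocAlgebra R X}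
    (ha : ∀ w ∈ a.coeff.support, w.length < N) :
    ∑ n ∈ range N, lengthComponent n a = a := by
  ext w
  simp only [lengthComponent, coeff_sum, Finsupp.coe_finsetSum, Finset.sum_apply,
    Finsupp.filter_apply, sum_ite_eq, mem_range, ite_eq_left_iff, not_lt]
  intro hN
  by_contra h
  exact (ha w (Finsupp.mem_support_iff.mpr (Ne.symm h))).not_ge hN

theorem length_of_mem_support_lengthComponent {n : ℕ} {a : FreeNonUnitalNonAssocAlgebra R X}
    {w : FreeMagma X} (hw : w ∈ (lengthComponent n a).coeff.support) : w.length = n := by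
  simp only [lengthComponent, Finsupp.support_filter, mem_filter] at hw
  exact hw.2

theorem lengthComponent_eq_zero {k n : ℕ} {b : FreeNonUnitalNonAssocAlgebra R X}
    (hb : b ∈ lengthGE R X k) (hn : n < k) : lengthComponent n b = 0 := by
  ext w
  simp only [lengthComponent, Finsupp.filter_apply, coeff_zero, Finsupp.coe_zero, Pi.zero_apply,
    ite_eq_right_iff]
  rintro rfl
  by_contra h
  exact hn.not_ge (mem_lengthGE.mp hb w (Finsupp.mem_support_iff.mpr h))

end FreeNonUnitalNonAssocAlgebra

namespace FreeLieAlgebra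

open FreeNonUnitalNonAssocAlgebra

variable (R : Type*) {X : Type*} [CommRing R]

noncomputable def mkₗ : FreeNonUnitalNonAssocAlgebra R X →ₗ[R] FreeLieAlgebra R X where
  toFun := mk R
  map_add' _ _ := rfl
  map_smul' _ _ := rfl

variable {R}

theorem mkₗ_surjective : Function.Surjective (mkₗ R (X := X)) :=
  fun z => Quot.exists_rep z

theorem mkₗ_mul (a b : FreeNonUnitalNonAssocAlgebra R X) :
    mkₗ R (a * b) = ⁅mkₗ R a, mkₗ R b⁆ :=
  map_mul (mk R) a b

variable (R X) in
noncomputable def lengthIdeal (k : ℕ) : LieIdeal R (FreeLieAlgebra R X) :=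
  { (lengthGE R X k).map (mkₗ R) with
    lie_mem := by
      rintro x _ ⟨b, hb, rfl⟩
      obtain ⟨a, rfl⟩ := mkₗ_surjective x
      refine ⟨a * b, ?_, mkₗ_mul a b⟩
      exact lengthGE_antitone (Nat.le_add_left k 1) (mul_mem_lengthGE (mem_lengthGE_one a) hb) }

theorem mem_lengthIdeal {k : ℕ} {z : FreeLieAlgebra R X} :
    z ∈ lengthIdeal R X k ↔ ∃ b ∈ lengthGE R X k, mkₗ R b = z :=
  Iff.rfl

theorem lowerCentralSeries_le_lengthIdeal (k : ℕ) :
    LieModule.lowerCentralSeries R (FreeLieAlgebra R X) (FreeLieAlgebra R X) k ≤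
      lengthIdeal R X (k + 1) := by
  induction k with
  | zero =>
    intro z _
    obtain ⟨a, rfl⟩ := mkₗ_surjective z
    exact mem_lengthIdeal.mpr ⟨a, mem_lengthGE_one a, rfl⟩
  | succ k ih =>
    rw [LieModule.lowerCentralSeries_succ, LieSubmodule.lie_le_iff]
    rintro x - z hz
    obtain ⟨b, hb, rfl⟩ := mem_lengthIdeal.mp (ih hz)
    obtain ⟨a, rfl⟩ := mkₗ_surjective x
    refine mem_lengthIdeal.mpr ⟨a * b, ?_, mkₗ_mul a b⟩
    simpa only [add_comm] using mul_mem_lengthGE (mem_lengthGE_one a) hb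

variable (R) in
noncomputable def scale (c : R) : FreeLieAlgebra R X →ₗ⁅R⁆ FreeLieAlgebra R X :=
  lift R fun x => c • of R x

theorem scale_mkₗ_single (c : R) (w : FreeMagma X) (r : R) :
    scale R c (mkₗ R (single w r)) = c ^ w.length • mkₗ R (single w r) := by
  induction w generalizing r with
  | ih1 x =>
    have hx : mkₗ R (single (FreeMagma.of x) r) = r • of R x :=
      calc mkₗ R (single (FreeMagma.of x) r) = mkₗ R (r • single (FreeMagma.of x) 1) := by
            rw [smul_single, smul_eq_mul, mul_one]
        _ = r • of R x := map_smul _ _ _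
    rw [hx, map_smul, scale, lift_of_apply, FreeMagma.length, pow_one, smul_comm]
  | ih2 u v hu hv =>
    have huv : single (u * v) r = single u r * single v (1 : R) := by
      rw [single_mul_single, mul_one]
    rw [huv, mkₗ_mul, LieHom.map_lie, hu, hv, smul_lie, lie_smul, smul_smul, ← pow_add]
    rfl

theorem scale_mkₗ_lengthComponent (c : R) (n : ℕ) (a : FreeNonUnitalNonAssocAlgebra R X) :
    scale R c (mkₗ R (lengthComponent n a)) = c ^ n • mkₗ R (lengthComponent n a) := by
  conv_lhs => rw [← sum_coeff_single (lengthComponent n a), Finsupp.sum, map_sum, map_sum]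
  conv_rhs => rw [← sum_coeff_single (lengthComponent n a), Finsupp.sum, map_sum, smul_sum]
  exact sum_congr rfl fun w hw => by rw [scale_mkₗ_single, length_of_mem_support_lengthComponent hw]

theorem scale_mkₗ_eq_sum (c : R) {N : ℕ} {a : FreeNonUnitalNonAssocAlgebra R X}
    (ha : ∀ w ∈ a.coeff.support, w.length < N) :
    scale R c (mkₗ R a) = ∑ n ∈ range N, c ^ n • mkₗ R (lengthComponent n a) := by
  conv_lhs => rw [← sum_lengthComponent ha]
  simp only [map_sum, scale_mkₗ_lengthComponent]

theorem mkₗ_lengthComponent_eq_of_mkₗ_eq {K : Type*} [Field K] [Infinite K]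
    {a b : FreeNonUnitalNonAssocAlgebra K X} (hab : mkₗ K a = mkₗ K b) (n : ℕ) :
    mkₗ K (lengthComponent n a) = mkₗ K (lengthComponent n b) := by
  classical
  set N := n + 1 + (a.coeff.support ∪ b.coeff.support).sup FreeMagma.length
  have hbound : ∀ w ∈ a.coeff.support ∪ b.coeff.support, w.length < N := fun w hw => by
    have := le_sup (f := FreeMagma.length) hw
    omega
  have hscale (c : K) :
      ∑ m ∈ range N, c ^ m • (mkₗ K (lengthComponent m a) - mkₗ K (lengthComponent m b)) = 0 := by
    simp only [smul_sub, sum_sub_distrib]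
    rw [← scale_mkₗ_eq_sum c fun w hw => hbound w (mem_union_left _ hw),
      ← scale_mkₗ_eq_sum c fun w hw => hbound w (mem_union_right _ hw), hab, sub_self]
  exact sub_eq_zero.mp (Module.eq_zero_of_forall_sum_pow_smul_eq_zero hscale (by omega))

end FreeLieAlgebra

open FreeNonUnitalNonAssocAlgebra FreeLieAlgebra in
/-- The free Lie algebra over ℂ on a type `X` is residually nilpotent: the intersection
of its lower central series (`L¹ = L`, `L^{n+1} = [L, L^n]`) is zero. -/
theorem stmt13 (X : Type) :
    ⨅ n : ℕ,
      LieModule.lowerCentralSeries ℂ (FreeLieAlgebra ℂ X) (FreeLieAlgebra ℂ X) n = ⊥ := by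
  refine eq_bot_iff.mpr fun z hz => (LieSubmodule.mem_bot z).mpr ?_
  obtain ⟨a, rfl⟩ := mkₗ_surjective z
  set N := a.coeff.support.sup FreeMagma.length + 1
  have ha : ∀ w ∈ a.coeff.support, w.length < N := fun w hw =>
    Nat.lt_succ_of_le (le_sup (f := FreeMagma.length) hw)
  obtain ⟨b, hb, hba⟩ := mem_lengthIdeal.mp
    (lowerCentralSeries_le_lengthIdeal N ((LieSubmodule.mem_iInf _).mp hz N))
  calc mkₗ ℂ a = ∑ n ∈ range N, mkₗ ℂ (lengthComponent n a) := by
        rw [← map_sum, sum_lengthComponent ha]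
    _ = ∑ n ∈ range N, mkₗ ℂ (lengthComponent n b) :=
        sum_congr rfl fun n _ => mkₗ_lengthComponent_eq_of_mkₗ_eq hba.symm n
    _ = 0 := sum_eq_zero fun n hn => by
        rw [lengthComponent_eq_zero hb (Nat.lt_succ_of_lt (mem_range.mp hn)),
          map_zero]
end

section
/- Let 𝔤 be a Lie algebra over ℂ with an ℕ-grading 𝔤 = ⊕_{δ∈ℕ} 𝔤^{(δ)} (meaning [𝔤^{(i)}, 𝔤^{(j)}] ⊆ 𝔤^{(i+j)} for all i, j), such that 𝔤^{(0)} = ℂ·ν is one-dimensional and, for every δ, the operator ad ν is nilpotent on 𝔤^{(δ)} (i.e. (ad ν)^k(𝔤^{(δ)}) = 0 for some k). Let S be a graded Lie subalgebra of 𝔤 (S = ⊕_δ (S ∩ 𝔤^{(δ)})) containing ν and satisfying S + [𝔤, 𝔤] = 𝔤. Then S = 𝔤. -/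
/-!
Show `𝔤^{(δ)} ⊆ S` by strong induction on `δ`. Projecting `𝔤 = S + [𝔤, 𝔤]` onto degree `δ`
(which maps the graded `S` into itself), it suffices to place the degree-`δ` brackets
`⁅x, y⁆`, `x ∈ 𝔤^{(i)}`, `y ∈ 𝔤^{(j)}`, `i + j = δ`: they lie in `S` by induction when
`i, j > 0`, and in `ad ν (𝔤^{(δ)})` when one degree is zero. Hence
`𝔤^{(δ)} ⊆ S + ad ν (𝔤^{(δ)})`, and since `ad ν` preserves `S`, iterating gives
`𝔤^{(δ)} ⊆ S + (ad ν)^k (𝔤^{(δ)}) = S`.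
-/

namespace DirectSum.IsInternal

variable {R M : Type*} [Semiring R] [AddCommMonoid M] [Module R M]
  {ι : Type*} [DecidableEq ι] {A : ι → Submodule R M} (h : IsInternal A)

noncomputable def proj (i : ι) : M →ₗ[R] M :=
  (A i).subtype ∘ₗ component R ι (fun i ↦ A i) i ∘ₗ
    (LinearEquiv.ofBijective (coeLinearMap A) h).symm.toLinearMap

theorem proj_of_mem {i : ι} {x : M} (hx : x ∈ A i) : h.proj i x = x := by
  simp [proj, ← apply_eq_component, h.ofBijective_coeLinearMap_of_mem hx]

theorem proj_of_mem_ne {i j : ι} (hij : i ≠ j) {x : M} (hx : x ∈ A i) : h.proj j x = 0 := by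
  simp [proj, ← apply_eq_component, h.ofBijective_coeLinearMap_of_mem_ne hij hx]

theorem map_proj_le_of_eq_iSup_inf {p : Submodule R M} (hp : p = ⨆ i, p ⊓ A i) (j : ι) :
    p.map (h.proj j) ≤ p := by
  rw [Submodule.map_le_iff_le_comap]
  conv_lhs => rw [hp]
  refine iSup_le fun i x ⟨hxp, hxA⟩ ↦ ?_
  by_cases hij : i = j
  · subst hij
    simpa [h.proj_of_mem hxA] using hxp
  · simp [h.proj_of_mem_ne hij hxA]

theorem le_map_proj_sup_map_proj {p q : Submodule R M} (hpq : p ⊔ q = ⊤) (i : ι) :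
    A i ≤ p.map (h.proj i) ⊔ q.map (h.proj i) := by
  intro x hx
  rw [← Submodule.map_sup, hpq, ← h.proj_of_mem hx]
  exact Submodule.mem_map_of_mem Submodule.mem_top

end DirectSum.IsInternal

namespace Submodule

variable {R M : Type*} [Semiring R] [AddCommMonoid M] [Module R M] {f : M →ₗ[R] M}
  {S N : Submodule R M}

theorem map_pow_le_of_map_le (hS : S.map f ≤ S) (n : ℕ) : S.map (f ^ n) ≤ S := by
  induction n with
  | zero => rw [pow_zero, Module.End.one_eq_id, map_id]
  | succ n ih =>
    rw [pow_succ, Module.End.mul_eq_comp, map_comp]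
    exact (map_mono hS).trans ih

theorem le_sup_map_pow_of_le_sup_map (hS : S.map f ≤ S) (hN : N ≤ S ⊔ N.map f) (n : ℕ) :
    N ≤ S ⊔ N.map (f ^ n) := by
  induction n with
  | zero => rw [pow_zero, Module.End.one_eq_id, map_id]; exact le_sup_right
  | succ n ih =>
    calc N ≤ S ⊔ N.map (f ^ n) := ih
      _ ≤ S ⊔ (S ⊔ N.map f).map (f ^ n) := by gcongr
      _ ≤ S ⊔ N.map (f ^ (n + 1)) := by
        rw [map_sup, ← sup_assoc, sup_eq_left.mpr (map_pow_le_of_map_le hS n), pow_succ,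
          Module.End.mul_eq_comp, map_comp]

theorem le_of_le_sup_map_of_pow_eq_zero (hS : S.map f ≤ S) (hN : N ≤ S ⊔ N.map f) {k : ℕ}
    (hk : ∀ x ∈ N, (f ^ k) x = 0) : N ≤ S := by
  have hzero : N.map (f ^ k) = ⊥ := by
    rw [eq_bot_iff, map_le_iff_le_comap]
    exact hk
  simpa [hzero] using le_sup_map_pow_of_le_sup_map hS hN k

end Submodule

section Graded

variable {R L : Type*} [CommRing R] [LieRing L] [LieAlgebra R L]

theorem lie_mem_map_ad_of_mem_span_singleton {ν x y : L} {N : Submodule R L}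
    (hx : x ∈ Submodule.span R {ν}) (hy : y ∈ N) : ⁅x, y⁆ ∈ N.map (LieAlgebra.ad R L ν) := by
  obtain ⟨c, rfl⟩ := Submodule.mem_span_singleton.mp hx
  rw [smul_lie]
  exact Submodule.smul_mem _ c (Submodule.mem_map_of_mem hy)

theorem LieSubalgebra.map_ad_le {S : LieSubalgebra R L} {ν : L} (hν : ν ∈ S) :
    S.toSubmodule.map (LieAlgebra.ad R L ν) ≤ S.toSubmodule := by
  rw [Submodule.map_le_iff_le_comap]
  exact fun x hx ↦ S.lie_mem hν hx

variable {g : ℕ → Submodule R L}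

theorem DirectSum.IsInternal.map_proj_lie_top_top_le (hg : DirectSum.IsInternal g)
    (hbracket : ∀ i j : ℕ, ∀ x ∈ g i, ∀ y ∈ g j, ⁅x, y⁆ ∈ g (i + j)) {δ : ℕ} {P : Submodule R L}
    (hP : ∀ i j, i + j = δ → ∀ x ∈ g i, ∀ y ∈ g j, ⁅x, y⁆ ∈ P) :
    (⁅(⊤ : LieIdeal R L), ⊤⁆ : LieIdeal R L).toSubmodule.map (hg.proj δ) ≤ P := by
  have hmem (z : L) : z ∈ ⨆ i, g i := hg.submodule_iSup_eq_top ▸ Submodule.mem_top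
  rw [LieSubmodule.lieIdeal_oper_eq_linear_span', Submodule.map_span_le]
  rintro _ ⟨x, -, y, -, rfl⟩
  induction hmem x using Submodule.iSup_induction' with
  | mem i x hx =>
    induction hmem y using Submodule.iSup_induction' with
    | mem j y hy =>
      by_cases hij : i + j = δ
      · rw [hg.proj_of_mem (hij ▸ hbracket i j x hx y hy)]
        exact hP i j hij x hx y hy
      · simp [hg.proj_of_mem_ne hij (hbracket i j x hx y hy)]
    | zero => simp
    | add y y' _ _ hy hy' => simpa only [lie_add, map_add] using P.add_mem hy hy'
  | zero => simp
  | add x x' _ _ hx hx' => simpa only [add_lie, map_add] using P.add_mem hx hx'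

theorem DirectSum.IsInternal.le_of_forall_lt_le (hg : DirectSum.IsInternal g)
    (hbracket : ∀ i j : ℕ, ∀ x ∈ g i, ∀ y ∈ g j, ⁅x, y⁆ ∈ g (i + j))
    {ν : L} (h0 : g 0 = Submodule.span R {ν})
    {S : LieSubalgebra R L} (hgraded : S.toSubmodule = ⨆ δ, S.toSubmodule ⊓ g δ) (hνS : ν ∈ S)
    (hgen : S.toSubmodule ⊔ (⁅(⊤ : LieIdeal R L), ⊤⁆ : LieIdeal R L).toSubmodule = ⊤)
    {δ : ℕ} (hlt : ∀ i < δ, g i ≤ S.toSubmodule) {k : ℕ}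
    (hk : ∀ x ∈ g δ, (LieAlgebra.ad R L ν ^ k) x = 0) : g δ ≤ S.toSubmodule := by
  set P := S.toSubmodule ⊔ (g δ).map (LieAlgebra.ad R L ν)
  have hbracketP : ∀ i j, i + j = δ → ∀ x ∈ g i, ∀ y ∈ g j, ⁅x, y⁆ ∈ P := by
    intro i j hij x hx y hy
    rcases Nat.eq_zero_or_pos i with rfl | hi
    · rw [zero_add] at hij
      subst hij
      exact Submodule.mem_sup_right (lie_mem_map_ad_of_mem_span_singleton (h0 ▸ hx) hy)
    rcases Nat.eq_zero_or_pos j with rfl | hj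
    · rw [add_zero] at hij
      subst hij
      rw [← lie_skew]
      exact P.neg_mem
        (Submodule.mem_sup_right (lie_mem_map_ad_of_mem_span_singleton (h0 ▸ hy) hx))
    exact Submodule.mem_sup_left (S.lie_mem (hlt i (by omega) hx) (hlt j (by omega) hy))
  have hδP : g δ ≤ P :=
    calc g δ ≤ S.toSubmodule.map (hg.proj δ) ⊔
          (⁅(⊤ : LieIdeal R L), ⊤⁆ : LieIdeal R L).toSubmodule.map (hg.proj δ) :=
          hg.le_map_proj_sup_map_proj hgen δ
      _ ≤ S.toSubmodule ⊔ P :=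
          sup_le_sup (hg.map_proj_le_of_eq_iSup_inf hgraded δ)
            (hg.map_proj_lie_top_top_le hbracket hbracketP)
      _ = P := sup_eq_right.mpr le_sup_left
  exact Submodule.le_of_le_sup_map_of_pow_eq_zero (LieSubalgebra.map_ad_le hνS) hδP hk

end Graded

theorem stmt17_general (𝔤 : Type) [LieRing 𝔤] [LieAlgebra ℂ 𝔤]
    (g : ℕ → Submodule ℂ 𝔤)
    (hdecomp : DirectSum.IsInternal g)
    (hbracket : ∀ i j : ℕ, ∀ x ∈ g i, ∀ y ∈ g j, ⁅x, y⁆ ∈ g (i + j))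
    (ν : 𝔤)
    (h0 : g 0 = Submodule.span ℂ ({ν} : Set 𝔤))
    (hnil : ∀ δ : ℕ, ∃ k : ℕ, ∀ x ∈ g δ, ((LieAlgebra.ad ℂ 𝔤 ν) ^ k) x = 0)
    (S : LieSubalgebra ℂ 𝔤)
    (hgraded : S.toSubmodule = ⨆ δ : ℕ, (S.toSubmodule ⊓ g δ))
    (hνS : ν ∈ S)
    (hgen : S.toSubmodule ⊔
        LieSubmodule.toSubmodule ⁅(⊤ : LieIdeal ℂ 𝔤), (⊤ : LieIdeal ℂ 𝔤)⁆ = ⊤) :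
    S = ⊤ := by
  have hle (δ : ℕ) : g δ ≤ S.toSubmodule := by
    induction δ using Nat.strong_induction_on with
    | _ δ ih =>
      obtain ⟨k, hk⟩ := hnil δ
      exact hdecomp.le_of_forall_lt_le hbracket h0 hgraded hνS hgen ih hk
  rw [← LieSubalgebra.toSubmodule_eq_top, eq_top_iff, ← hdecomp.submodule_iSup_eq_top]
  exact iSup_le hle

/-- Let `𝔤` be an ℕ-graded complex Lie algebra with one-dimensional degree-zero part
`𝔤⁰ = ℂ·ν`, such that `ad ν` is nilpotent on every graded component. If `S` is a graded
Lie subalgebra containing `ν` with `S + [𝔤, 𝔤] = 𝔤`, then `S = 𝔤`. -/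
theorem stmt17 (𝔤 : Type) [LieRing 𝔤] [LieAlgebra ℂ 𝔤]
    (g : ℕ → Submodule ℂ 𝔤)
    (hdecomp : DirectSum.IsInternal g)
    (hbracket : ∀ i j : ℕ, ∀ x ∈ g i, ∀ y ∈ g j, ⁅x, y⁆ ∈ g (i + j))
    (ν : 𝔤) (hν : ν ≠ 0)
    (h0 : g 0 = Submodule.span ℂ ({ν} : Set 𝔤))
    (hnil : ∀ δ : ℕ, ∃ k : ℕ, ∀ x ∈ g δ, ((LieAlgebra.ad ℂ 𝔤 ν) ^ k) x = 0)
    (S : LieSubalgebra ℂ 𝔤)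
    (hgraded : S.toSubmodule = ⨆ δ : ℕ, (S.toSubmodule ⊓ g δ))
    (hνS : ν ∈ S)
    (hgen : S.toSubmodule ⊔
        LieSubmodule.toSubmodule ⁅(⊤ : LieIdeal ℂ 𝔤), (⊤ : LieIdeal ℂ 𝔤)⁆ = ⊤) :
    S = ⊤ :=
  stmt17_general 𝔤 g hdecomp hbracket ν h0 hnil S hgraded hνS hgen
end

section
/- Let q ∈ ℂˣ with |q| > 1. Then the torsion subgroup of the quotient group ℂˣ/q^ℤ is isomorphic to (ℚ/ℤ) × (ℚ/ℤ). -/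
/-!
Every `x ∈ ℂˣ` is `exp z`, and `x` is torsion modulo `q^ℤ` exactly when `x ^ n = q ^ m` for some
`n > 0`, i.e. when `z` is a rational combination `2πi a + b log q`. Hence
`(a, b) ↦ exp (2πi a + b log q)` maps `ℚ × ℚ` onto the torsion subgroup. Its kernel is `ℤ × ℤ`
because `|q| ≠ 1` makes `Re (log q) ≠ 0`, so `2πi` and `log q` are linearly independent over `ℝ`.
-/

open Complex
open scoped Real

namespace TateCurve

lemma eq_zero_of_mul_two_pi_I_add_mul_eq_zero {w : ℂ} (hw : w.re ≠ 0) {x y : ℝ}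
    (h : x * (2 * π * I) + y * w = 0) : x = 0 ∧ y = 0 := by
  have hy : y = 0 := by simpa [hw] using congrArg re h
  subst hy
  simpa [Real.pi_ne_zero, I_ne_zero] using h

variable (q : ℂˣ)

noncomputable def periodMap : ℚ × ℚ →+ ℂ :=
  AddMonoidHom.mk' (fun p => p.1 * (2 * π * I) + p.2 * log q) fun p p' => by
    simp only [Prod.fst_add, Prod.snd_add, Rat.cast_add]; ring

@[simp]
lemma periodMap_apply (p : ℚ × ℚ) : periodMap q p = p.1 * (2 * π * I) + p.2 * log q := rfl

noncomputable def torsionParam : Multiplicative (ℚ × ℚ) →* ℂˣ ⧸ Subgroup.zpowers q :=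
  (QuotientGroup.mk' _).comp (expMonoidHom.toHomUnits.comp (periodMap q).toMultiplicative)

lemma torsionParam_eq_mk {p : Multiplicative (ℚ × ℚ)} {y : ℂˣ}
    (h : exp (periodMap q p.toAdd) = y) : torsionParam q p = y :=
  congrArg _ (Units.ext h)

lemma torsionParam_eq_one_iff (p : Multiplicative (ℚ × ℚ)) :
    torsionParam q p = 1 ↔ ∃ n k : ℤ, periodMap q p.toAdd = n * log q + k * (2 * π * I) := by
  rw [torsionParam, MonoidHom.comp_apply, QuotientGroup.mk'_apply, QuotientGroup.eq_one_iff,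
    Subgroup.mem_zpowers_iff]
  refine exists_congr fun n => ?_
  have hqn : ((q ^ n : ℂˣ) : ℂ) = exp (n * log q) := by
    rw [exp_int_mul, exp_log q.ne_zero, Units.val_zpow_eq_zpow_val]
  rw [Units.ext_iff, hqn, eq_comm]
  exact exp_eq_exp_iff_exists_int

lemma torsionParam_mem_torsion (p : Multiplicative (ℚ × ℚ)) :
    torsionParam q p ∈ CommGroup.torsion (ℂˣ ⧸ Subgroup.zpowers q) := by
  set a := p.toAdd.1
  set b := p.toAdd.2
  refine isOfFinOrder_iff_pow_eq_one.2 ⟨a.den * b.den, by positivity, ?_⟩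
  rw [← map_pow, torsionParam_eq_one_iff]
  refine ⟨b.num * a.den, a.num * b.den, ?_⟩
  have ha : ((a.den * b.den : ℕ) * a : ℚ) = (a.num * b.den : ℤ) := by
    push_cast; rw [← Rat.mul_den_eq_num a]; ring
  have hb : ((a.den * b.den : ℕ) * b : ℚ) = (b.num * a.den : ℤ) := by
    push_cast; rw [← Rat.mul_den_eq_num b]; ring
  rw [toAdd_pow, periodMap_apply, Prod.smul_fst, Prod.smul_snd, nsmul_eq_mul, nsmul_eq_mul,
    ha, hb]
  push_cast
  ring

lemma exists_periodMap_eq_log_of_zpow_eq_pow {y : ℂˣ} {n : ℕ} (hn : n ≠ 0) {m : ℤ}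
    (h : q ^ m = y ^ n) : ∃ p, periodMap q p = log y := by
  have hexp : exp (n * log y) = exp (m * log q) := by
    rw [exp_nat_mul, exp_int_mul, exp_log y.ne_zero, exp_log q.ne_zero]
    exact_mod_cast congrArg Units.val h.symm
  obtain ⟨k, hk⟩ := exp_eq_exp_iff_exists_int.1 hexp
  refine ⟨((k / n : ℚ), (m / n : ℚ)), ?_⟩
  have hn' : (n : ℂ) ≠ 0 := by exact_mod_cast hn
  simp only [periodMap_apply, Rat.cast_div, Rat.cast_intCast, Rat.cast_natCast]
  field_simp
  linear_combination -hk

lemma range_torsionParam :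
    (torsionParam q).range = CommGroup.torsion (ℂˣ ⧸ Subgroup.zpowers q) := by
  refine le_antisymm (by rintro _ ⟨p, rfl⟩; exact torsionParam_mem_torsion q p) fun x hx => ?_
  obtain ⟨y, rfl⟩ := QuotientGroup.mk_surjective x
  obtain ⟨n, hn, hyn⟩ := isOfFinOrder_iff_pow_eq_one.1 hx
  rw [← QuotientGroup.mk_pow, QuotientGroup.eq_one_iff, Subgroup.mem_zpowers_iff] at hyn
  obtain ⟨m, hm⟩ := hyn
  obtain ⟨p, hp⟩ := exists_periodMap_eq_log_of_zpow_eq_pow q hn.ne' hm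
  exact ⟨Multiplicative.ofAdd p, torsionParam_eq_mk q (by rw [toAdd_ofAdd, hp, exp_log y.ne_zero])⟩

noncomputable def reduceModInt : Multiplicative (ℚ × ℚ) →*
    Multiplicative ((ℚ ⧸ AddSubgroup.zmultiples (1 : ℚ)) × (ℚ ⧸ AddSubgroup.zmultiples (1 : ℚ))) :=
  ((QuotientAddGroup.mk' _).prodMap (QuotientAddGroup.mk' _)).toMultiplicative

lemma reduceModInt_surjective : Function.Surjective reduceModInt :=
  (QuotientAddGroup.mk'_surjective _).prodMap (QuotientAddGroup.mk'_surjective _)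

lemma reduceModInt_eq_one_iff (p : Multiplicative (ℚ × ℚ)) :
    reduceModInt p = 1 ↔ (∃ k : ℤ, (k : ℚ) = p.toAdd.1) ∧ ∃ n : ℤ, (n : ℚ) = p.toAdd.2 := by
  simp [reduceModInt, Prod.ext_iff, ← toAdd_eq_zero, AddSubgroup.mem_zmultiples_iff]

lemma ker_torsionParam (hq : ‖(q : ℂ)‖ ≠ 1) : (torsionParam q).ker = reduceModInt.ker := by
  ext p
  rw [MonoidHom.mem_ker, MonoidHom.mem_ker, torsionParam_eq_one_iff, reduceModInt_eq_one_iff]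
  constructor
  · rintro ⟨n, k, h⟩
    rw [periodMap_apply] at h
    have hre : (log (q : ℂ)).re ≠ 0 := by
      rw [log_re]; exact Real.log_ne_zero_of_pos_of_ne_one (by simp) hq
    obtain ⟨ha, hb⟩ := eq_zero_of_mul_two_pi_I_add_mul_eq_zero hre
      (x := p.toAdd.1 - k) (y := p.toAdd.2 - n) (by push_cast; linear_combination h)
    exact ⟨⟨k, by exact_mod_cast (sub_eq_zero.1 ha).symm⟩,
      ⟨n, by exact_mod_cast (sub_eq_zero.1 hb).symm⟩⟩
  · rintro ⟨⟨k, ha⟩, ⟨n, hb⟩⟩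
    exact ⟨n, k, by rw [periodMap_apply, ← ha, ← hb]; push_cast; ring⟩

end TateCurve

open TateCurve in
/-- For `|q| > 1`, the torsion subgroup of `E_q = ℂˣ/q^ℤ` is isomorphic to
`(ℚ/ℤ) × (ℚ/ℤ)`. -/
theorem stmt18 (q : ℂˣ) (hq : 1 < ‖(q : ℂ)‖) :
    Nonempty ((CommGroup.torsion (ℂˣ ⧸ Subgroup.zpowers q)) ≃*
      Multiplicative ((ℚ ⧸ AddSubgroup.zmultiples (1 : ℚ)) ×
        (ℚ ⧸ AddSubgroup.zmultiples (1 : ℚ)))) :=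
  ⟨(MulEquiv.subgroupCongr (range_torsionParam q).symm).trans <|
    (QuotientGroup.quotientKerEquivRange _).symm.trans <|
    (QuotientGroup.quotientMulEquivOfEq (ker_torsionParam q hq.ne')).trans <|
    QuotientGroup.quotientKerEquivOfSurjective _ reduceModInt_surjective⟩
end
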